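/- arXiv:2010.09059 — 2 statements merged into one kernel-verified Lean document; each statement's English description precedes it below -/
import Mathlib

section
/- The optimality (KKT) matrix 𝒜 = [[M, 0, Aᵀ], [0, αM, −Mᵀ], [A, −M, 0]] is invertible whenever M is symmetric positive definite, A is invertible, and α > 0. -/
/-!
After regrouping the unknowns as `((x, y), z)`, `𝒜` is the saddle-point matrix
`[[H, Bᵀ], [B, 0]]` with `H = diag(M, αM)` positive definite and `B = [A, −M]`.
If `H u + Bᵀ z = 0` and `B u = 0`, then `uᵀ H u = −(B u)ᵀ z = 0`, so `u = 0`; then `Bᵀ z = 0`,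
whose first block `Aᵀ z = 0` forces `z = 0` as `A` is invertible.
-/

open Matrix

/-- The KKT (optimality system) block matrix
`𝒜 = [[M, 0, Aᵀ], [0, αM, −Mᵀ], [A, −M, 0]]`. -/
def kktMatrix (n : ℕ) (M A : Matrix (Fin n) (Fin n) ℝ) (α : ℝ) :
    Matrix (Fin n ⊕ (Fin n ⊕ Fin n)) (Fin n ⊕ (Fin n ⊕ Fin n)) ℝ :=
  Matrix.fromBlocks M (Matrix.fromCols 0 A.transpose)
    (Matrix.fromRows 0 A)
    (Matrix.fromBlocks (α • M) (-M.transpose) (-M) 0)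

namespace Matrix

variable {l m n R K : Type*}

theorem PosDef.fromBlocks_zero_zero [Fintype m] [Fintype n]
    [Ring R] [PartialOrder R] [StarRing R] [StarOrderedRing R]
    {A : Matrix m m R} {D : Matrix n n R} (hA : A.PosDef) (hD : D.PosDef) :
    (fromBlocks A 0 0 D).PosDef := by
  refine of_dotProduct_mulVec_pos (hA.1.fromBlocks (by simp) hD.1) fun v hv => ?_
  obtain ⟨x, y, rfl⟩ : ∃ x y, v = Sum.elim x y := ⟨_, _, (Sum.elim_comp_inl_inr v).symm⟩
  have hsplit : star (Sum.elim x y) ⬝ᵥ (fromBlocks A 0 0 D *ᵥ Sum.elim x y) =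
      star x ⬝ᵥ (A *ᵥ x) + star y ⬝ᵥ (D *ᵥ y) := by
    simp [fromBlocks_mulVec, Function.star_sumElim, sumElim_dotProduct_sumElim]
  rw [hsplit]
  rcases eq_or_ne x 0 with rfl | hx
  · have hy : y ≠ 0 := by rintro rfl; exact hv (by simp)
    simpa using hD.dotProduct_mulVec_pos hy
  · exact add_pos_of_pos_of_nonneg (hA.dotProduct_mulVec_pos hx)
      (hD.posSemidef.dotProduct_mulVec_nonneg y)

theorem isUnit_fromBlocks_zero₂₂ [Fintype m] [Fintype n] [DecidableEq m] [DecidableEq n]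
    [Field K] [PartialOrder K] [StarRing K]
    {H : Matrix m m K} {B : Matrix n m K} (hH : H.PosDef) (hB : Function.Injective Bᴴ.mulVec) :
    IsUnit (fromBlocks H Bᴴ B 0) := by
  rw [← mulVec_injective_iff_isUnit, ← coe_mulVecLin, injective_iff_map_eq_zero]
  intro v hv
  obtain ⟨x, z, rfl⟩ : ∃ x z, v = Sum.elim x z := ⟨_, _, (Sum.elim_comp_inl_inr v).symm⟩
  simp only [mulVecLin_apply, fromBlocks_mulVec, Sum.elim_comp_inl, Sum.elim_comp_inr,
    zero_mulVec, add_zero, ← Sum.elim_zero_zero, Sum.elim_eq_iff] at hv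
  obtain ⟨hstationary, hfeasible⟩ := hv
  have hx : x = 0 := by
    by_contra hx
    have : star x ⬝ᵥ (H *ᵥ x) = 0 := by
      rw [eq_neg_of_add_eq_zero_left hstationary, dotProduct_neg, dotProduct_mulVec,
        ← star_mulVec, hfeasible, star_zero, zero_dotProduct, neg_zero]
    exact (hH.dotProduct_mulVec_pos hx).ne' this
  have hz : z = 0 := hB (by simpa [hx] using hstationary)
  simp [hx, hz]

theorem mulVec_fromRows_injective_of_left [Fintype n] [Semiring R]
    {A₁ : Matrix l n R} {A₂ : Matrix m n R} (h : Function.Injective A₁.mulVec) :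
    Function.Injective (fromRows A₁ A₂).mulVec := by
  intro u v huv
  simp only [fromRows_mulVec, Sum.elim_eq_iff] at huv
  exact h huv.1

end Matrix

theorem kktMatrix_eq_submatrix (n : ℕ) (M A : Matrix (Fin n) (Fin n) ℝ) (α : ℝ) :
    kktMatrix n M A α =
      (fromBlocks (fromBlocks M 0 0 (α • M)) (fromCols A (-M))ᵀ (fromCols A (-M)) 0).submatrix
        (Equiv.sumAssoc _ _ _).symm (Equiv.sumAssoc _ _ _).symm := by
  ext (i | i | i) (j | j | j) <;> simp [kktMatrix]

/-- The KKT matrix is invertible whenever `M` is symmetric positive definite,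
`A` is invertible, and `α > 0`. -/
theorem kktMatrix_isUnit (n : ℕ) (M A : Matrix (Fin n) (Fin n) ℝ) (α : ℝ)
    (hM : M.PosDef) (hA : IsUnit A) (hα : 0 < α) :
    IsUnit (kktMatrix n M A α) := by
  have hH : (fromBlocks M 0 0 (α • M)).PosDef := hM.fromBlocks_zero_zero (hM.smul hα)
  have hB : Function.Injective (fromCols A (-M))ᴴ.mulVec := by
    rw [conjTranspose_eq_transpose_of_trivial, transpose_fromCols]
    exact mulVec_fromRows_injective_of_left
      (mulVec_injective_iff_isUnit.mpr ((isUnit_transpose A).mpr hA))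
  rw [kktMatrix_eq_submatrix, isUnit_submatrix_equiv, ← conjTranspose_eq_transpose_of_trivial]
  exact isUnit_fromBlocks_zero₂₂ hH hB
end

section
/- Error bound for DEIM via the projector norm: for any f ∈ ℝⁿ, ‖f − U(PᵀU)⁻¹Pᵀ f‖₂ ≤ ‖I − U(PᵀU)⁻¹Pᵀ‖₂ · ‖f − UUᵀ f‖₂, provided U has orthonormal columns and PᵀU is invertible. -/
open Matrix

/-- DEIM error bound via the projector norm: for `U` with orthonormal columns and
`Pᵀ U` invertible, `‖f − U(PᵀU)⁻¹Pᵀ f‖₂ ≤ ‖I − U(PᵀU)⁻¹Pᵀ‖₂ · ‖f − U Uᵀ f‖₂`,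
where norms are the Euclidean vector norm and the induced spectral operator norm. -/
theorem deim_error_bound (n m : ℕ) (U P : Matrix (Fin n) (Fin m) ℝ)
    (hU : U.transpose * U = 1)
    (p : Fin m → Fin n) (hp : Function.Injective p)
    (hP : ∀ i j, P i j = if i = p j then (1 : ℝ) else 0)
    (hinv : IsUnit (P.transpose * U)) (f : EuclideanSpace ℝ (Fin n)) :
    ‖f - Matrix.toEuclideanCLM (𝕜 := ℝ) (n := Fin n)
        (U * (P.transpose * U)⁻¹ * P.transpose) f‖ ≤
      ‖(Matrix.toEuclideanCLM (𝕜 := ℝ) (n := Fin n)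
          (1 - U * (P.transpose * U)⁻¹ * P.transpose) :
          EuclideanSpace ℝ (Fin n) →L[ℝ] EuclideanSpace ℝ (Fin n))‖ *
        ‖f - Matrix.toEuclideanCLM (𝕜 := ℝ) (n := Fin n) (U * U.transpose) f‖ := by
  set Q : Matrix (Fin n) (Fin n) ℝ := U * (P.transpose * U)⁻¹ * P.transpose with hQ
  have hdet : IsUnit (P.transpose * U).det := (Matrix.isUnit_iff_isUnit_det _).mp hinv
  have hQU : Q * U = U := by
    rw [hQ, Matrix.mul_assoc, Matrix.mul_assoc,
      Matrix.nonsing_inv_mul _ hdet, Matrix.mul_one]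
  have hkey : (1 - Q) * (1 - U * U.transpose) = 1 - Q := by
    simp only [Matrix.mul_sub, Matrix.sub_mul, Matrix.mul_one, Matrix.one_mul,
      ← Matrix.mul_assoc, hQU]
    abel
  have h1 : f - Matrix.toEuclideanCLM (𝕜 := ℝ) (n := Fin n) (U * U.transpose) f
      = Matrix.toEuclideanCLM (𝕜 := ℝ) (n := Fin n) (1 - U * U.transpose) f := by
    simp [map_sub]
  have h2 : f - Matrix.toEuclideanCLM (𝕜 := ℝ) (n := Fin n) Q f
      = Matrix.toEuclideanCLM (𝕜 := ℝ) (n := Fin n) (1 - Q) f := by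
    simp [map_sub]
  have h3 : Matrix.toEuclideanCLM (𝕜 := ℝ) (n := Fin n) (1 - Q)
      (f - Matrix.toEuclideanCLM (𝕜 := ℝ) (n := Fin n) (U * U.transpose) f)
      = f - Matrix.toEuclideanCLM (𝕜 := ℝ) (n := Fin n) Q f := by
    rw [h1, ← ContinuousLinearMap.mul_apply, ← _root_.map_mul, hkey, ← h2]
  rw [← h3]
  exact (Matrix.toEuclideanCLM (𝕜 := ℝ) (n := Fin n) (1 - Q)).le_opNorm _
end
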